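/- arXiv:math/0312214 — 3 statements merged into one kernel-verified Lean document; each statement's English description precedes it below -/
import Mathlib

section
/- Let G be a group and let C be a free G-category over a commutative ring k. Let α and β be G-orbits of objects of C, and choose representatives x_α ∈ α and x_β ∈ β. Then the morphism k-module Hom_{C/G}(α,β) of the quotient category is canonically isomorphic, as a k-module, to the direct sum ⊕_{s∈G} Hom_C(s·x_α, x_β); the isomorphism sends the class of a morphism f : x → y (x ∈ α, y ∈ β) to s·f, where s is the unique group element with s·y = x_β. -/
/-! Basic notion of a (small) category over a commutative ring `k`:
objects form a type, morphism sets are `k`-modules and composition is `k`-bilinear. -/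

structure kCat (k : Type) [CommRing k] where
  Obj : Type
  Hom : Obj → Obj → Type
  [homAdd : ∀ x y, AddCommGroup (Hom x y)]
  [homMod : ∀ x y, Module k (Hom x y)]
  id : ∀ x, Hom x x
  comp : ∀ {x y z}, Hom y z → Hom x y → Hom x z
  id_comp : ∀ {x y} (f : Hom x y), comp (id y) f = f
  comp_id : ∀ {x y} (f : Hom x y), comp f (id x) = f
  assoc : ∀ {w x y z} (h : Hom y z) (g : Hom x y) (f : Hom w x),
    comp (comp h g) f = comp h (comp g f)
  comp_add_left : ∀ {x y z} (g g' : Hom y z) (f : Hom x y),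
    comp (g + g') f = comp g f + comp g' f
  comp_add_right : ∀ {x y z} (g : Hom y z) (f f' : Hom x y),
    comp g (f + f') = comp g f + comp g f'
  comp_smul_left : ∀ {x y z} (a : k) (g : Hom y z) (f : Hom x y),
    comp (a • g) f = a • comp g f
  comp_smul_right : ∀ {x y z} (a : k) (g : Hom y z) (f : Hom x y),
    comp g (a • f) = a • comp g f

attribute [instance] kCat.homAdd kCat.homMod

/-- Transport of a morphism along equalities of its source and target. -/
def kCat.trans2 {k : Type} [CommRing k] (C : kCat k) {x x' y y' : C.Obj}
    (hx : x = x') (hy : y = y') (f : C.Hom x y) : C.Hom x' y' :=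
  cast (by rw [hx, hy]) f

/-- A `k`-linear functor between categories over `k`. -/
structure kFunctor (k : Type) [CommRing k] (C D : kCat k) where
  obj : C.Obj → D.Obj
  map : ∀ x y, C.Hom x y →ₗ[k] D.Hom (obj x) (obj y)
  map_id : ∀ x, map x x (C.id x) = D.id (obj x)
  map_comp : ∀ {x y z} (g : C.Hom y z) (f : C.Hom x y),
    map x z (C.comp g f) = D.comp (map y z g) (map x y f)

/-- The identity functor. -/
def kFunctor.idF (k : Type) [CommRing k] (C : kCat k) : kFunctor k C C where
  obj := fun x => x
  map := fun _ _ => LinearMap.id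
  map_id := fun _ => rfl
  map_comp := fun _ _ => rfl

/-- Composition of `k`-linear functors. -/
def kFunctor.compF {k : Type} [CommRing k] {C D E : kCat k}
    (F : kFunctor k D E) (H : kFunctor k C D) : kFunctor k C E where
  obj := fun x => F.obj (H.obj x)
  map := fun x y => (F.map _ _).comp (H.map x y)
  map_id := fun x => by simp [H.map_id, F.map_id]
  map_comp := fun g f => by simp [H.map_comp, F.map_comp]

/-- A natural transformation between `k`-linear functors. -/
structure kNatTrans {k : Type} [CommRing k] {C D : kCat k} (F G : kFunctor k C D) where
  app : ∀ x, D.Hom (F.obj x) (G.obj x)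
  naturality : ∀ {x y} (f : C.Hom x y),
    D.comp (app y) (F.map x y f) = D.comp (G.map x y f) (app x)

/-- A natural isomorphism between `k`-linear functors, given by a pair of mutually
inverse natural transformations. -/
structure kNatIso {k : Type} [CommRing k] {C D : kCat k} (F G : kFunctor k C D) where
  hom : kNatTrans F G
  inv : kNatTrans G F
  hom_inv : ∀ x, D.comp (inv.app x) (hom.app x) = D.id (F.obj x)
  inv_hom : ∀ x, D.comp (hom.app x) (inv.app x) = D.id (G.obj x)

/-- An equivalence of categories over `k`. -/
structure kEquivalence (k : Type) [CommRing k] (C D : kCat k) where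
  F : kFunctor k C D
  G : kFunctor k D C
  unitIso : kNatIso (kFunctor.idF k C) (kFunctor.compF G F)
  counitIso : kNatIso (kFunctor.compF F G) (kFunctor.idF k D)

/-- An isomorphism of categories over `k`: a `k`-linear functor which is bijective on
objects and bijective (hence a `k`-module isomorphism) on each morphism module. -/
structure kCatIso (k : Type) [CommRing k] (C D : kCat k) where
  F : kFunctor k C D
  objBij : Function.Bijective F.obj
  homBij : ∀ x y, Function.Bijective (F.map x y)

/-- The full subcategory on the objects satisfying a predicate `P`. -/
def kCat.fullSub {k : Type} [CommRing k] (C : kCat k) (P : C.Obj → Prop) : kCat k where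
  Obj := { x : C.Obj // P x }
  Hom := fun x y => C.Hom x.1 y.1
  homAdd := fun _ _ => inferInstance
  homMod := fun _ _ => inferInstance
  id := fun x => C.id x.1
  comp := fun g f => C.comp g f
  id_comp := fun f => C.id_comp f
  comp_id := fun f => C.comp_id f
  assoc := fun h g f => C.assoc h g f
  comp_add_left := fun g g' f => C.comp_add_left g g' f
  comp_add_right := fun g f f' => C.comp_add_right g f f'
  comp_smul_left := fun a g f => C.comp_smul_left a g f
  comp_smul_right := fun a g f => C.comp_smul_right a g f

/-- The inclusion functor of a full subcategory. -/
def kCat.inclFunctor {k : Type} [CommRing k] (C : kCat k) (P : C.Obj → Prop) :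
    kFunctor k (C.fullSub P) C where
  obj := fun x => x.1
  map := fun _ _ => LinearMap.id
  map_id := fun _ => rfl
  map_comp := fun _ _ => rfl

/-! Direct sum helpers. -/

open DirectSum

/-- The element of a direct sum concentrated in one component. -/
noncomputable def dsSingle {ι : Type} {M : ι → Type} [∀ i, AddCommGroup (M i)]
    (i : ι) (m : M i) : ⨁ i, M i :=
  letI := Classical.decEq ι
  DFinsupp.single i m

/-- The linear inclusion of one component into a direct sum. -/
noncomputable def dsLof (k : Type) [CommRing k] {ι : Type} (M : ι → Type)
    [∀ i, AddCommGroup (M i)] [∀ i, Module k (M i)] (i : ι) : M i →ₗ[k] ⨁ i, M i :=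
  letI := Classical.decEq ι
  DirectSum.lof k ι M i

/-- A family of submodules of `M` is *internal* (i.e. `M` is their internal direct sum)
when the canonical summation map from the direct sum of the submodules to `M`
is bijective. -/
def SubmodulesInternal (k : Type) [CommRing k] {ι : Type} {M : Type}
    [AddCommGroup M] [Module k M] (p : ι → Submodule k M) : Prop :=
  letI := Classical.decEq ι
  Function.Bijective
    (⇑(DFinsupp.sumAddHom (β := fun i => ↥(p i)) fun i => ((p i).subtype).toAddMonoidHom))

/-! `G`-categories over `k`, free actions, the quotient (orbit) category of a free
`G`-category, and the skew category. -/

/-- An action of a group `G` on a category `C` over `k`: an action on objects together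
with `k`-linear maps on morphism modules, compatible with composition, identities and
the group law. -/
structure GAction (k G : Type) [CommRing k] [Group G] (C : kCat k) where
  smulObj : G → C.Obj → C.Obj
  one_smulObj : ∀ x, smulObj 1 x = x
  mul_smulObj : ∀ s t x, smulObj (s * t) x = smulObj s (smulObj t x)
  smulHom : ∀ (s : G) (x y : C.Obj), C.Hom x y →ₗ[k] C.Hom (smulObj s x) (smulObj s y)
  smulHom_comp : ∀ (s : G) {x y z} (g : C.Hom y z) (f : C.Hom x y),
    smulHom s x z (C.comp g f) = C.comp (smulHom s y z g) (smulHom s x y f)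
  smulHom_id : ∀ (s : G) (x), smulHom s x x (C.id x) = C.id (smulObj s x)
  one_smulHom : ∀ {x y} (f : C.Hom x y), HEq (smulHom 1 x y f) f
  mul_smulHom : ∀ (s t : G) {x y} (f : C.Hom x y),
    HEq (smulHom (s * t) x y f) (smulHom s _ _ (smulHom t x y f))

namespace GAction

variable {k G : Type} [CommRing k] [Group G] {C : kCat k}

/-- The action is free when no nontrivial group element fixes an object. -/
def IsFree (A : GAction k G C) : Prop := ∀ (s : G) (x : C.Obj), A.smulObj s x = x → s = 1

/-- The orbit equivalence relation on objects. -/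
def orbitSetoid (A : GAction k G C) : Setoid C.Obj where
  r x y := ∃ s : G, A.smulObj s x = y
  iseqv := by
    refine ⟨fun x => ⟨1, A.one_smulObj x⟩, ?_, ?_⟩
    · rintro x y ⟨s, h⟩
      exact ⟨s⁻¹, by rw [← h, ← A.mul_smulObj, inv_mul_cancel, A.one_smulObj]⟩
    · rintro x y z ⟨s, h⟩ ⟨t, h'⟩
      exact ⟨t * s, by rw [A.mul_smulObj, h, h']⟩

/-- The set of `G`-orbits of objects. -/
def QuotObj (A : GAction k G C) : Type := Quotient A.orbitSetoid

/-- The orbit of an object. -/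
def orb (A : GAction k G C) (x : C.Obj) : A.QuotObj := Quotient.mk A.orbitSetoid x

theorem orb_smul (A : GAction k G C) (s : G) (x : C.Obj) :
    A.orb (A.smulObj s x) = A.orb x :=
  (Quotient.sound ⟨s, rfl⟩ : A.orb x = A.orb (A.smulObj s x)).symm

/-- The index type of pairs `(x, y)` with `x` in the orbit `α` and `y` in the orbit `β`. -/
def PairIdx (A : GAction k G C) (α β : A.QuotObj) : Type :=
  { x : C.Obj // A.orb x = α } × { y : C.Obj // A.orb y = β }

/-- The direct sum `⊕_{x ∈ α, y ∈ β} Hom_C(x, y)`. -/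
def HomSum (A : GAction k G C) (α β : A.QuotObj) : Type :=
  ⨁ p : A.PairIdx α β, C.Hom p.1.1 p.2.1

noncomputable instance (A : GAction k G C) (α β : A.QuotObj) :
    AddCommGroup (A.HomSum α β) :=
  inferInstanceAs (AddCommGroup (⨁ p : A.PairIdx α β, C.Hom p.1.1 p.2.1))

noncomputable instance (A : GAction k G C) (α β : A.QuotObj) :
    Module k (A.HomSum α β) :=
  inferInstanceAs (Module k (⨁ p : A.PairIdx α β, C.Hom p.1.1 p.2.1))

/-- The element of `HomSum` concentrated in the component indexed by `(x, y)`. -/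
noncomputable def homSumSingle (A : GAction k G C) {α β : A.QuotObj} {x y : C.Obj}
    (hx : A.orb x = α) (hy : A.orb y = β) (f : C.Hom x y) : A.HomSum α β :=
  dsSingle (M := fun p : A.PairIdx α β => C.Hom p.1.1 p.2.1) ⟨⟨x, hx⟩, ⟨y, hy⟩⟩ f

/-- The submodule of `HomSum` spanned by the elements `s • f - f`; quotienting by it
produces the largest quotient on which `G` acts trivially. -/
noncomputable def gSub (A : GAction k G C) (α β : A.QuotObj) :
    Submodule k (A.HomSum α β) :=
  Submodule.span k
    {z | ∃ (s : G) (x y : C.Obj) (hx : A.orb x = α) (hy : A.orb y = β) (f : C.Hom x y),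
      z = A.homSumSingle ((A.orb_smul s x).trans hx) ((A.orb_smul s y).trans hy)
            (A.smulHom s x y f)
          - A.homSumSingle hx hy f}

/-- The morphism module of the quotient category `C/G` from the orbit `α` to the
orbit `β`. -/
def QuotHom (A : GAction k G C) (α β : A.QuotObj) : Type :=
  A.HomSum α β ⧸ A.gSub α β

noncomputable instance (A : GAction k G C) (α β : A.QuotObj) :
    AddCommGroup (A.QuotHom α β) :=
  inferInstanceAs (AddCommGroup (A.HomSum α β ⧸ A.gSub α β))

noncomputable instance (A : GAction k G C) (α β : A.QuotObj) :
    Module k (A.QuotHom α β) :=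
  inferInstanceAs (Module k (A.HomSum α β ⧸ A.gSub α β))

/-- The `k`-linear map sending a morphism `f : x → y` of `C` to its class in the
morphism module of the quotient category. -/
noncomputable def projL (A : GAction k G C) {α β : A.QuotObj} {x y : C.Obj}
    (hx : A.orb x = α) (hy : A.orb y = β) : C.Hom x y →ₗ[k] A.QuotHom α β :=
  (A.gSub α β).mkQ.comp
    (letI := Classical.decEq (A.PairIdx α β)
     DirectSum.lof k (A.PairIdx α β) (fun p => C.Hom p.1.1 p.2.1) ⟨⟨x, hx⟩, ⟨y, hy⟩⟩)

/-- The class of a morphism `f : x → y` of `C` in the quotient category. -/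
noncomputable def proj (A : GAction k G C) {α β : A.QuotObj} {x y : C.Obj}
    (hx : A.orb x = α) (hy : A.orb y = β) (f : C.Hom x y) : A.QuotHom α β :=
  A.projL hx hy f

end GAction

/-- The structure of the quotient category `C/G` of a (free) `G`-category `C` over `k`:
its objects are the `G`-orbits of objects of `C`, its morphism modules are the modules
`QuotHom`, and its composition and identities are induced by those of `C` via the
projection, making it a category over `k`. -/
structure QuotStr {k G : Type} [CommRing k] [Group G] {C : kCat k} (A : GAction k G C) where
  comp : ∀ {α β γ : A.QuotObj}, A.QuotHom β γ → A.QuotHom α β → A.QuotHom α γ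
  id : ∀ α : A.QuotObj, A.QuotHom α α
  id_comp : ∀ {α β} (f : A.QuotHom α β), comp (id β) f = f
  comp_id : ∀ {α β} (f : A.QuotHom α β), comp f (id α) = f
  assoc : ∀ {α β γ δ} (h : A.QuotHom γ δ) (g : A.QuotHom β γ) (f : A.QuotHom α β),
    comp (comp h g) f = comp h (comp g f)
  comp_add_left : ∀ {α β γ} (g g' : A.QuotHom β γ) (f : A.QuotHom α β),
    comp (g + g') f = comp g f + comp g' f
  comp_add_right : ∀ {α β γ} (g : A.QuotHom β γ) (f f' : A.QuotHom α β),
    comp g (f + f') = comp g f + comp g f'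
  comp_smul_left : ∀ {α β γ} (a : k) (g : A.QuotHom β γ) (f : A.QuotHom α β),
    comp (a • g) f = a • comp g f
  comp_smul_right : ∀ {α β γ} (a : k) (g : A.QuotHom β γ) (f : A.QuotHom α β),
    comp g (a • f) = a • comp g f
  comp_proj : ∀ {α β γ} {x y z : C.Obj}
    (hx : A.orb x = α) (hy : A.orb y = β) (hz : A.orb z = γ)
    (g : C.Hom y z) (f : C.Hom x y),
    comp (A.proj hy hz g) (A.proj hx hy f) = A.proj hx hz (C.comp g f)
  id_proj : ∀ {α} {x : C.Obj} (hx : A.orb x = α), id α = A.proj hx hx (C.id x)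

/-- The quotient category `C/G` as a category over `k`. -/
noncomputable def QuotStr.toKCat {k G : Type} [CommRing k] [Group G] {C : kCat k}
    {A : GAction k G C} (Q : QuotStr A) : kCat k where
  Obj := A.QuotObj
  Hom := A.QuotHom
  homAdd := fun _ _ => inferInstance
  homMod := fun _ _ => inferInstance
  id := Q.id
  comp := Q.comp
  id_comp := Q.id_comp
  comp_id := Q.comp_id
  assoc := Q.assoc
  comp_add_left := Q.comp_add_left
  comp_add_right := Q.comp_add_right
  comp_smul_left := Q.comp_smul_left
  comp_smul_right := Q.comp_smul_right


/-! Freeness makes the element `s` with `s·y = x_β`, and then the element `t` with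
`t·x_α = s·x`, unique. Hence `f : x → y` ↦ `s·f`, put in the component `t`, defines a map
`⊕_{x ∈ α, y ∈ β} Hom_C(x, y) → ⊕_{t ∈ G} Hom_C(t·x_α, x_β)` that does not depend on
choices and kills the relations `s·f - f`. The inverse sends `f : t·x_α → x_β` to its
class; both composites are the identity because `s·f` and `f` have the same class. -/

namespace kCat

variable {k : Type} [CommRing k] (C : kCat k)

theorem trans2_eq_trans2_of_heq {x₁ y₁ x₂ y₂ x y : C.Obj}
    (h₁ : x₁ = x) (h₁' : y₁ = y) (h₂ : x₂ = x) (h₂' : y₂ = y)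
    {f : C.Hom x₁ y₁} {g : C.Hom x₂ y₂} (hfg : HEq f g) :
    C.trans2 h₁ h₁' f = C.trans2 h₂ h₂' g := by
  subst h₁ h₁' h₂ h₂'
  exact eq_of_heq hfg

def trans2L {x x' y y' : C.Obj} (hx : x = x') (hy : y = y') :
    C.Hom x y →ₗ[k] C.Hom x' y' where
  toFun := C.trans2 hx hy
  map_add' := by subst hx hy; intros; rfl
  map_smul' := by subst hx hy; intros; rfl

end kCat

namespace GAction

variable {k G : Type} [CommRing k] [Group G] {C : kCat k} (A : GAction k G C)

variable {A} in
theorem IsFree.smulObj_left_injective (hfree : A.IsFree) (x : C.Obj) :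
    Function.Injective (A.smulObj · x) := by
  intro s t h
  have hfix : A.smulObj (t⁻¹ * s) x = x := by
    simp only [A.mul_smulObj, h, ← A.mul_smulObj, inv_mul_cancel, A.one_smulObj]
  exact inv_mul_eq_one.mp (hfree _ _ hfix) |>.symm

noncomputable def transporter {x y : C.Obj} (h : A.orb x = A.orb y) : G :=
  (Quotient.exact h : ∃ s, A.smulObj s x = y).choose

theorem smulObj_transporter {x y : C.Obj} (h : A.orb x = A.orb y) :
    A.smulObj (A.transporter h) x = y :=
  (Quotient.exact h : ∃ s, A.smulObj s x = y).choose_spec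

theorem proj_trans2 {α β : A.QuotObj} {x x' y y' : C.Obj} (ex : x = x') (ey : y = y')
    (hx : A.orb x = α) (hx' : A.orb x' = α) (hy : A.orb y = β) (hy' : A.orb y' = β)
    (f : C.Hom x y) : A.proj hx' hy' (C.trans2 ex ey f) = A.proj hx hy f := by
  subst ex ey
  rfl

theorem proj_smulHom {α β : A.QuotObj} {x y : C.Obj} (s : G)
    (hx : A.orb x = α) (hy : A.orb y = β)
    (hsx : A.orb (A.smulObj s x) = α) (hsy : A.orb (A.smulObj s y) = β) (f : C.Hom x y) :
    A.proj hsx hsy (A.smulHom s x y f) = A.proj hx hy f :=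
  (Submodule.Quotient.eq _).mpr (Submodule.subset_span ⟨s, x, y, hx, hy, f, rfl⟩)

variable {α β : A.QuotObj} {xa xb : C.Obj} (ha : A.orb xa = α) (hb : A.orb xb = β)

noncomputable def toDirectSumComponent (p : A.PairIdx α β) :
    C.Hom p.1.1 p.2.1 →ₗ[k] ⨁ t : G, C.Hom (A.smulObj t xa) xb :=
  let hs := A.smulObj_transporter (p.2.2.trans hb.symm)
  let ht := A.smulObj_transporter (ha.trans ((A.orb_smul _ p.1.1).trans p.1.2).symm)
  dsLof k (fun t : G => C.Hom (A.smulObj t xa) xb) _ ∘ₗ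
    C.trans2L ht.symm hs ∘ₗ A.smulHom _ p.1.1 p.2.1

theorem toDirectSumComponent_apply (hfree : A.IsFree) {x y : C.Obj} (hx : A.orb x = α)
    (hy : A.orb y = β) (f : C.Hom x y) (s t : G) (hs : A.smulObj s y = xb)
    (ht : A.smulObj t xa = A.smulObj s x) :
    A.toDirectSumComponent ha hb ⟨⟨x, hx⟩, ⟨y, hy⟩⟩ f =
      dsSingle (M := fun u : G => C.Hom (A.smulObj u xa) xb) t
        (C.trans2 ht.symm hs (A.smulHom s x y f)) := by
  obtain rfl : s = A.transporter (hy.trans hb.symm) :=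
    hfree.smulObj_left_injective y (hs.trans (A.smulObj_transporter _).symm)
  obtain rfl : t = A.transporter (ha.trans ((A.orb_smul _ x).trans hx).symm) :=
    hfree.smulObj_left_injective xa (ht.trans (A.smulObj_transporter _).symm)
  rfl

noncomputable def homSumToDirectSum :
    A.HomSum α β →ₗ[k] ⨁ t : G, C.Hom (A.smulObj t xa) xb :=
  letI := Classical.decEq (A.PairIdx α β)
  DirectSum.toModule k (A.PairIdx α β) _ (A.toDirectSumComponent ha hb)

theorem homSumToDirectSum_homSumSingle {x y : C.Obj} (hx : A.orb x = α) (hy : A.orb y = β)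
    (f : C.Hom x y) :
    A.homSumToDirectSum ha hb (A.homSumSingle hx hy f) =
      A.toDirectSumComponent ha hb ⟨⟨x, hx⟩, ⟨y, hy⟩⟩ f :=
  letI := Classical.decEq (A.PairIdx α β)
  DirectSum.toModule_lof k _ _

theorem gSub_le_ker_homSumToDirectSum (hfree : A.IsFree) :
    A.gSub α β ≤ LinearMap.ker (A.homSumToDirectSum ha hb) := by
  rw [gSub, Submodule.span_le]
  rintro _ ⟨s, x, y, hx, hy, f, rfl⟩
  obtain ⟨r, hr⟩ : ∃ r, A.smulObj r y = xb := Quotient.exact (hy.trans hb.symm)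
  obtain ⟨t, ht⟩ : ∃ t, A.smulObj t xa = A.smulObj r x :=
    Quotient.exact (ha.trans ((A.orb_smul r x).trans hx).symm)
  -- `s·f` is sent by `r s⁻¹` to the same component and the same morphism as `f` by `r`.
  have hrs (z : C.Obj) : A.smulObj (r * s⁻¹) (A.smulObj s z) = A.smulObj r z := by
    rw [← A.mul_smulObj, inv_mul_cancel_right]
  have hsf := A.mul_smulHom (r * s⁻¹) s f
  rw [inv_mul_cancel_right] at hsf
  simp only [SetLike.mem_coe, LinearMap.mem_ker, map_sub, sub_eq_zero,
    homSumToDirectSum_homSumSingle, A.toDirectSumComponent_apply ha hb hfree hx hy f r t hr ht,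
    A.toDirectSumComponent_apply ha hb hfree _ _ _ (r * s⁻¹) t ((hrs y).trans hr)
      (ht.trans (hrs x).symm)]
  exact congrArg _ (C.trans2_eq_trans2_of_heq _ _ _ _ hsf.symm)

noncomputable def quotHomToDirectSum (hfree : A.IsFree) :
    A.QuotHom α β →ₗ[k] ⨁ t : G, C.Hom (A.smulObj t xa) xb :=
  (A.gSub α β).liftQ _ (A.gSub_le_ker_homSumToDirectSum ha hb hfree)

theorem quotHomToDirectSum_proj (hfree : A.IsFree) {x y : C.Obj} (hx : A.orb x = α)
    (hy : A.orb y = β) (f : C.Hom x y) :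
    A.quotHomToDirectSum ha hb hfree (A.proj hx hy f) =
      A.toDirectSumComponent ha hb ⟨⟨x, hx⟩, ⟨y, hy⟩⟩ f :=
  A.homSumToDirectSum_homSumSingle ha hb hx hy f

noncomputable def directSumToQuotHom :
    (⨁ t : G, C.Hom (A.smulObj t xa) xb) →ₗ[k] A.QuotHom α β :=
  letI := Classical.decEq G
  DirectSum.toModule k G _ fun t => A.projL ((A.orb_smul t xa).trans ha) hb

theorem directSumToQuotHom_dsSingle (t : G) (f : C.Hom (A.smulObj t xa) xb) :
    A.directSumToQuotHom ha hb (dsSingle (M := fun u : G => C.Hom (A.smulObj u xa) xb) t f) =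
      A.proj ((A.orb_smul t xa).trans ha) hb f :=
  letI := Classical.decEq G
  DirectSum.toModule_lof k _ _

theorem quotHomToDirectSum_comp_directSumToQuotHom (hfree : A.IsFree) :
    A.quotHomToDirectSum ha hb hfree ∘ₗ A.directSumToQuotHom ha hb = LinearMap.id := by
  classical
  refine DirectSum.linearMap_ext k fun t => LinearMap.ext fun f => ?_
  change A.quotHomToDirectSum ha hb hfree (A.directSumToQuotHom ha hb (dsSingle t f)) =
    dsSingle t f
  rw [directSumToQuotHom_dsSingle, quotHomToDirectSum_proj, A.toDirectSumComponent_apply ha hb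
    hfree _ hb f 1 t (A.one_smulObj xb) (A.one_smulObj _).symm]
  exact congrArg _ (C.trans2_eq_trans2_of_heq _ _ rfl rfl (A.one_smulHom f))

theorem directSumToQuotHom_comp_quotHomToDirectSum (hfree : A.IsFree) :
    A.directSumToQuotHom ha hb ∘ₗ A.quotHomToDirectSum ha hb hfree = LinearMap.id := by
  classical
  refine Submodule.linearMap_qext _ (DirectSum.linearMap_ext k fun ⟨⟨x, hx⟩, ⟨y, hy⟩⟩ =>
    LinearMap.ext fun f => ?_)
  change A.directSumToQuotHom ha hb (A.quotHomToDirectSum ha hb hfree (A.proj hx hy f)) =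
    A.proj hx hy f
  obtain ⟨s, hs⟩ : ∃ s, A.smulObj s y = xb := Quotient.exact (hy.trans hb.symm)
  obtain ⟨t, ht⟩ : ∃ t, A.smulObj t xa = A.smulObj s x :=
    Quotient.exact (ha.trans ((A.orb_smul s x).trans hx).symm)
  rw [quotHomToDirectSum_proj, A.toDirectSumComponent_apply ha hb hfree hx hy f s t hs ht,
    directSumToQuotHom_dsSingle, A.proj_trans2 _ _ ((A.orb_smul s x).trans hx) _
      ((A.orb_smul s y).trans hy), proj_smulHom]

end GAction

/-- **Lemma (Cibils–Marcos).** Let `C` be a free `G`-category over `k`, let `α, β` be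
orbits of objects with chosen representatives `x_α ∈ α` and `x_β ∈ β`. Then the
morphism module `Hom_{C/G}(α, β)` of the quotient category is canonically isomorphic
as a `k`-module to `⊕_{s ∈ G} Hom_C(s·x_α, x_β)`; the isomorphism sends the class of
`f : x → y` (`x ∈ α`, `y ∈ β`) to `s·f` placed in the appropriate component, where `s`
is the (unique) group element with `s·y = x_β`. -/
theorem quotHom_linearEquiv_directSum (k G : Type) [CommRing k] [Group G]
    (C : kCat k) (A : GAction k G C) (hfree : A.IsFree)
    (α β : A.QuotObj) (xa xb : C.Obj) (ha : A.orb xa = α) (hb : A.orb xb = β) :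
    ∃ φ : A.QuotHom α β ≃ₗ[k] ⨁ s : G, C.Hom (A.smulObj s xa) xb,
      ∀ (x y : C.Obj) (hx : A.orb x = α) (hy : A.orb y = β) (f : C.Hom x y)
        (s t : G) (hs : A.smulObj s y = xb) (ht : A.smulObj t xa = A.smulObj s x),
        φ (A.proj hx hy f) =
          dsSingle (M := fun u : G => C.Hom (A.smulObj u xa) xb) t
            (C.trans2 ht.symm hs (A.smulHom s x y f)) := by
  refine ⟨.ofLinearMap (A.quotHomToDirectSum ha hb hfree) (A.directSumToQuotHom ha hb)
    (A.quotHomToDirectSum_comp_directSumToQuotHom ha hb hfree)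
    (A.directSumToQuotHom_comp_quotHomToDirectSum ha hb hfree), ?_⟩
  intro x y hx hy f s t hs ht
  exact (A.quotHomToDirectSum_proj ha hb hfree hx hy f).trans
    (A.toDirectSumComponent_apply ha hb hfree hx hy f s t hs ht)
end

section
/- Let G be a finite group and let C be a G-category over a commutative ring k with finitely many objects. Then G acts on the k-algebra a(C) by algebra automorphisms, and the k-algebra a(C[G]) of the skew category C[G] is isomorphic to the skew group algebra a(C)[G]; an isomorphism sends the elementary morphism f ∈ Hom_C(sx,y), viewed in the s-component of Hom_{C[G]}(x,y), to f ⊗ s. -/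
/-! Direct sum helpers. -/

open DirectSum

namespace GAction

variable {k G : Type} [CommRing k] [Group G] {C : kCat k}

/-- The morphism module `⊕_{s ∈ G} Hom_C(s·x, y)` of the skew category `C[G]`. -/
def SkewHom (A : GAction k G C) (x y : C.Obj) : Type :=
  ⨁ s : G, C.Hom (A.smulObj s x) y

noncomputable instance (A : GAction k G C) (x y : C.Obj) : AddCommGroup (A.SkewHom x y) :=
  inferInstanceAs (AddCommGroup (⨁ s : G, C.Hom (A.smulObj s x) y))

noncomputable instance (A : GAction k G C) (x y : C.Obj) : Module k (A.SkewHom x y) :=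
  inferInstanceAs (Module k (⨁ s : G, C.Hom (A.smulObj s x) y))

/-- The morphism `f ∈ Hom_C(s·x, y)` viewed in the `s`-component of
`Hom_{C[G]}(x, y)`. -/
noncomputable def skewSingle (A : GAction k G C) {x y : C.Obj} (s : G)
    (f : C.Hom (A.smulObj s x) y) : A.SkewHom x y :=
  dsSingle (M := fun s : G => C.Hom (A.smulObj s x) y) s f

end GAction

/-- The structure of the skew category `C[G]` of a `G`-category `C` over `k`: it has
the same objects as `C`, morphism modules `SkewHom x y = ⊕_{s ∈ G} Hom_C(s·x, y)`,
composition determined on components by `g_t ∘ f_s = (g ∘ (t·f))_{ts}`, and identities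
given by `(1_x)_1`. -/
structure SkewStr {k G : Type} [CommRing k] [Group G] {C : kCat k} (A : GAction k G C) where
  comp : ∀ {x y z : C.Obj}, A.SkewHom y z → A.SkewHom x y → A.SkewHom x z
  id : ∀ x : C.Obj, A.SkewHom x x
  id_comp : ∀ {x y} (f : A.SkewHom x y), comp (id y) f = f
  comp_id : ∀ {x y} (f : A.SkewHom x y), comp f (id x) = f
  assoc : ∀ {w x y z} (h : A.SkewHom y z) (g : A.SkewHom x y) (f : A.SkewHom w x),
    comp (comp h g) f = comp h (comp g f)
  comp_add_left : ∀ {x y z} (g g' : A.SkewHom y z) (f : A.SkewHom x y),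
    comp (g + g') f = comp g f + comp g' f
  comp_add_right : ∀ {x y z} (g : A.SkewHom y z) (f f' : A.SkewHom x y),
    comp g (f + f') = comp g f + comp g f'
  comp_smul_left : ∀ {x y z} (a : k) (g : A.SkewHom y z) (f : A.SkewHom x y),
    comp (a • g) f = a • comp g f
  comp_smul_right : ∀ {x y z} (a : k) (g : A.SkewHom y z) (f : A.SkewHom x y),
    comp g (a • f) = a • comp g f
  comp_single : ∀ {x y z : C.Obj} (t s : G)
    (g : C.Hom (A.smulObj t y) z) (f : C.Hom (A.smulObj s x) y),
    comp (A.skewSingle t g) (A.skewSingle s f) =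
      A.skewSingle (t * s)
        (C.trans2 (A.mul_smulObj t s x).symm rfl (C.comp g (A.smulHom t _ _ f)))
  id_single : ∀ x : C.Obj,
    id x = A.skewSingle 1 (C.trans2 (A.one_smulObj x).symm rfl (C.id x))

/-- The skew category `C[G]` as a category over `k`. -/
noncomputable def SkewStr.toKCat {k G : Type} [CommRing k] [Group G] {C : kCat k}
    {A : GAction k G C} (S : SkewStr A) : kCat k where
  Obj := C.Obj
  Hom := A.SkewHom
  homAdd := fun _ _ => inferInstance
  homMod := fun _ _ => inferInstance
  id := S.id
  comp := S.comp
  id_comp := S.id_comp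
  comp_id := S.comp_id
  assoc := S.assoc
  comp_add_left := S.comp_add_left
  comp_add_right := S.comp_add_right
  comp_smul_left := S.comp_smul_left
  comp_smul_right := S.comp_smul_right

/-! The `k`-algebra `a(C)` associated to a category over `k` with finitely many
objects, characterized by its universal matrix-algebra properties; skew group
algebras. -/

/-- `R` is the `k`-algebra `a(C)` of the category `C` over `k` (the direct sum of all
morphism modules with the matrix product induced by composition) when the given
embeddings `ι` of the morphism modules satisfy the matrix product rules, the sum of
the identities is the unit, and `R` is the direct sum of the images. -/
def IsCatAlgebra (k : Type) [CommRing k] (C : kCat k) (R : Type) [Ring R] [Algebra k R]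
    (ι : ∀ x y : C.Obj, C.Hom x y →ₗ[k] R) : Prop :=
  letI := Classical.decEq (C.Obj × C.Obj)
  (∀ {x y z : C.Obj} (g : C.Hom y z) (f : C.Hom x y),
      ι y z g * ι x y f = ι x z (C.comp g f)) ∧
  (∀ {x y y' z : C.Obj} (g : C.Hom y' z) (f : C.Hom x y), y ≠ y' → ι y' z g * ι x y f = 0) ∧
  ((∑ᶠ x : C.Obj, ι x x (C.id x)) = 1) ∧
  Function.Bijective
    (⇑(DFinsupp.sumAddHom (β := fun p : C.Obj × C.Obj => C.Hom p.1 p.2)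
      fun p => (ι p.1 p.2).toAddMonoidHom))

/-- `D` is the skew group algebra `A[G]` of the `G`-algebra `(A, σ)` when it contains
`A` via `jA` and invertible elements `jG s` subject to `s·a = σ_s(a)·s`, and is free
over `A` with basis the `jG s`. -/
def IsSkewGroupAlgebra (k G : Type) [CommRing k] [Group G] (A : Type) [Ring A]
    [Algebra k A] (σ : G →* (A ≃ₐ[k] A)) (D : Type) [Ring D] [Algebra k D]
    (jA : A →ₐ[k] D) (jG : G →* Dˣ) : Prop :=
  (∀ (s : G) (a : A), (jG s : D) * jA a = jA (σ s a) * (jG s : D)) ∧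
  Function.Bijective (fun f : G →₀ A => f.sum fun s a => jA a * (jG s : D))


/-! ### Auxiliary machinery for the proof -/

attribute [local instance 2000] Classical.decEq

section CatAlgAux

variable {k : Type} [CommRing k]

theorem homFam_congr {C : kCat k} {M : Type} (φ : ∀ x y : C.Obj, C.Hom x y → M)
    {x x' y y' : C.Obj} (hx : x = x') (hy : y = y') {f : C.Hom x y} {f' : C.Hom x' y'}
    (hf : HEq f f') : φ x y f = φ x' y' f' := by
  subst hx; subst hy; rw [eq_of_heq hf]

theorem kCat.trans2_heq {C : kCat k} {x x' y y' : C.Obj} (hx : x = x') (hy : y = y')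
    (f : C.Hom x y) : HEq (C.trans2 hx hy f) f := cast_heq _ f

/-- `kCat.trans2` as a linear map. -/
def trans2L {C : kCat k} {x x' y y' : C.Obj} (hx : x = x') (hy : y = y') :
    C.Hom x y →ₗ[k] C.Hom x' y' := by subst hx; subst hy; exact LinearMap.id

theorem trans2L_heq {C : kCat k} {x x' y y' : C.Obj} (hx : x = x') (hy : y = y')
    (f : C.Hom x y) : HEq (trans2L (k := k) hx hy f) f := by subst hx; subst hy; rfl

variable {C : kCat k} {R : Type} [Ring R] [Algebra k R]
  {ι : ∀ x y : C.Obj, C.Hom x y →ₗ[k] R}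

/-- The canonical linear equivalence `⊕ Hom ≃ a(C)`. -/
noncomputable def catEquiv (hR : IsCatAlgebra k C R ι) :
    (Π₀ p : C.Obj × C.Obj, C.Hom p.1 p.2) ≃ₗ[k] R :=
  LinearEquiv.ofBijective
    (DFinsupp.lsum k (M := fun p : C.Obj × C.Obj => C.Hom p.1 p.2) (N := R)
      fun p => ι p.1 p.2)
    hR.2.2.2

theorem catEquiv_single (hR : IsCatAlgebra k C R ι) (x y : C.Obj) (f : C.Hom x y) :
    catEquiv hR (DFinsupp.single (⟨x, y⟩ : C.Obj × C.Obj) f) = ι x y f := by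
  show (DFinsupp.lsum k (M := fun p : C.Obj × C.Obj => C.Hom p.1 p.2) (N := R)
      fun p => ι p.1 p.2) (DFinsupp.single (⟨x, y⟩ : C.Obj × C.Obj) f) = ι x y f
  exact DFinsupp.lsum_single (S := k) _ _ _

theorem catEquiv_symm_apply (hR : IsCatAlgebra k C R ι) (x y : C.Obj) (f : C.Hom x y) :
    (catEquiv hR).symm (ι x y f) = DFinsupp.single (⟨x, y⟩ : C.Obj × C.Obj) f :=
  (LinearEquiv.symm_apply_eq _).2 (catEquiv_single hR x y f).symm

theorem cat_ext (hR : IsCatAlgebra k C R ι) {M : Type} [AddCommGroup M] [Module k M]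
    {φ ψ : R →ₗ[k] M} (h : ∀ x y (f : C.Hom x y), φ (ι x y f) = ψ (ι x y f)) : φ = ψ := by
  have key : φ ∘ₗ (catEquiv hR).toLinearMap = ψ ∘ₗ (catEquiv hR).toLinearMap := by
    apply DFinsupp.lhom_ext
    intro p f
    obtain ⟨x, y⟩ := p
    simpa only [LinearMap.comp_apply, LinearEquiv.coe_coe, catEquiv_single hR] using h x y f
  apply LinearMap.ext
  intro r
  obtain ⟨d, rfl⟩ := (catEquiv hR).surjective r
  exact LinearMap.congr_fun key d

theorem mul_of_gens {S D : Type} [Ring S] [Algebra k S] [Ring D] [Algebra k D]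
    (Φ : S →ₗ[k] D) (T : Set S)
    (ext : ∀ φ ψ : S →ₗ[k] D, (∀ t ∈ T, φ t = ψ t) → φ = ψ)
    (hgen : ∀ t ∈ T, ∀ u ∈ T, Φ (u * t) = Φ u * Φ t) (a b : S) :
    Φ (a * b) = Φ a * Φ b := by
  have step1 : ∀ t ∈ T, ∀ a : S, Φ (a * t) = Φ a * Φ t := by
    intro t ht a
    have h2 := ext (Φ ∘ₗ LinearMap.mulRight k t) ((LinearMap.mulRight k (Φ t)) ∘ₗ Φ)
      (fun u hu => by
        simpa only [LinearMap.comp_apply, LinearMap.mulRight_apply] using hgen t ht u hu)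
    simpa only [LinearMap.comp_apply, LinearMap.mulRight_apply] using LinearMap.congr_fun h2 a
  have h3 := ext (Φ ∘ₗ LinearMap.mulLeft k a) ((LinearMap.mulLeft k (Φ a)) ∘ₗ Φ)
    (fun t ht => by
      simpa only [LinearMap.comp_apply, LinearMap.mulLeft_apply] using step1 t ht a)
  simpa only [LinearMap.comp_apply, LinearMap.mulLeft_apply] using LinearMap.congr_fun h3 b

end CatAlgAux

section MainAux

variable {k G : Type} [CommRing k] [Group G] {C : kCat k} (A : GAction k G C)

theorem GAction.smul_left_cancel {s : G} {x y : C.Obj}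
    (h : A.smulObj s x = A.smulObj s y) : x = y := by
  have h2 := congrArg (A.smulObj s⁻¹) h
  rwa [← A.mul_smulObj, ← A.mul_smulObj, inv_mul_cancel, A.one_smulObj, A.one_smulObj] at h2

theorem GAction.smul_inv_smul (s : G) (x : C.Obj) :
    A.smulObj s⁻¹ (A.smulObj s x) = x := by
  rw [← A.mul_smulObj, inv_mul_cancel, A.one_smulObj]

theorem GAction.smul_smul_inv (s : G) (x : C.Obj) :
    A.smulObj s (A.smulObj s⁻¹ x) = x := by
  rw [← A.mul_smulObj, mul_inv_cancel, A.one_smulObj]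

variable {R : Type} [Ring R] [Algebra k R] (ι : ∀ x y : C.Obj, C.Hom x y →ₗ[k] R)

/-- The action of `s` on `a(C)` as a linear map. -/
noncomputable def sigmaL (hR : IsCatAlgebra k C R ι) (s : G) : R →ₗ[k] R :=
  (DFinsupp.lsum k (M := fun p : C.Obj × C.Obj => C.Hom p.1 p.2) (N := R)
    fun p => (ι (A.smulObj s p.1) (A.smulObj s p.2)) ∘ₗ (A.smulHom s p.1 p.2)) ∘ₗ
    (catEquiv hR).symm.toLinearMap

theorem sigmaL_apply (hR : IsCatAlgebra k C R ι) (s : G) (x y : C.Obj) (f : C.Hom x y) :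
    sigmaL A ι hR s (ι x y f) = ι (A.smulObj s x) (A.smulObj s y) (A.smulHom s x y f) := by
  have h1 : sigmaL A ι hR s (ι x y f)
      = (DFinsupp.lsum k (M := fun p : C.Obj × C.Obj => C.Hom p.1 p.2) (N := R)
          fun p => (ι (A.smulObj s p.1) (A.smulObj s p.2)) ∘ₗ (A.smulHom s p.1 p.2))
        (DFinsupp.single (⟨x, y⟩ : C.Obj × C.Obj) f) :=
    congrArg (fun z => (DFinsupp.lsum k (M := fun p : C.Obj × C.Obj => C.Hom p.1 p.2) (N := R)
          fun p => (ι (A.smulObj s p.1) (A.smulObj s p.2)) ∘ₗ (A.smulHom s p.1 p.2)) z)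
      (catEquiv_symm_apply hR x y f)
  rw [h1]
  exact DFinsupp.lsum_single (S := k) _ _ _

variable {D : Type} [Ring D] [Algebra k D] (jA : R →ₐ[k] D) (jG : G →* Dˣ)
variable {σ : G →* (R ≃ₐ[k] R)}
variable {S : Type} [Ring S] [Algebra k S]

/-- The canonical map `a(C[G]) → a(C)[G]`. -/
noncomputable def PsiL {Ss : SkewStr A} {κ : ∀ x y : C.Obj, A.SkewHom x y →ₗ[k] S}
    (hS : IsCatAlgebra k Ss.toKCat S κ) : S →ₗ[k] D :=
  (DFinsupp.lsum k (M := fun p : C.Obj × C.Obj => A.SkewHom p.1 p.2) (N := D)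
    fun p => DFinsupp.lsum k (M := fun s : G => C.Hom (A.smulObj s p.1) p.2) (N := D)
      fun s => (LinearMap.mulRight k ((jG s : Dˣ) : D)) ∘ₗ jA.toLinearMap ∘ₗ
        ι (A.smulObj s p.1) p.2) ∘ₗ
    (catEquiv hS).symm.toLinearMap

theorem PsiL_apply {Ss : SkewStr A} {κ : ∀ x y : C.Obj, A.SkewHom x y →ₗ[k] S}
    (hS : IsCatAlgebra k Ss.toKCat S κ) (x y : C.Obj) (s : G)
    (f : C.Hom (A.smulObj s x) y) :
    PsiL A ι jA jG hS (κ x y (A.skewSingle s f)) = jA (ι (A.smulObj s x) y f) * (jG s : D) := by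
  have h0 : (catEquiv hS).symm (κ x y (A.skewSingle s f))
      = DFinsupp.single (β := fun p : C.Obj × C.Obj => A.SkewHom p.1 p.2) (⟨x, y⟩ : C.Obj × C.Obj) (A.skewSingle s f) :=
    (LinearEquiv.symm_apply_eq _).2 (catEquiv_single hS x y (A.skewSingle s f)).symm
  have h1 : PsiL A ι jA jG hS (κ x y (A.skewSingle s f))
      = (DFinsupp.lsum k (M := fun p : C.Obj × C.Obj => A.SkewHom p.1 p.2) (N := D)
          fun p => DFinsupp.lsum k (M := fun s : G => C.Hom (A.smulObj s p.1) p.2) (N := D)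
            fun s => (LinearMap.mulRight k ((jG s : Dˣ) : D)) ∘ₗ jA.toLinearMap ∘ₗ
              ι (A.smulObj s p.1) p.2)
        (DFinsupp.single (⟨x, y⟩ : C.Obj × C.Obj) (A.skewSingle s f)) :=
    congrArg (fun z => (DFinsupp.lsum k (M := fun p : C.Obj × C.Obj => A.SkewHom p.1 p.2) (N := D)
          fun p => DFinsupp.lsum k (M := fun s : G => C.Hom (A.smulObj s p.1) p.2) (N := D)
            fun s => (LinearMap.mulRight k ((jG s : Dˣ) : D)) ∘ₗ jA.toLinearMap ∘ₗ
              ι (A.smulObj s p.1) p.2) z) h0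
  rw [h1]
  exact (DFinsupp.lsum_single (S := k) _ _ _).trans (DFinsupp.lsum_single (S := k) _ _ _)

/-- The canonical map `a(C)[G] → a(C[G])`, on the Finsupp model. -/
noncomputable def edL : (G →₀ R) →ₗ[k] D :=
  Finsupp.lsum k fun s => (LinearMap.mulRight k ((jG s : Dˣ) : D)) ∘ₗ jA.toLinearMap

theorem edL_coe : ⇑(edL jA jG) = fun f : G →₀ R => f.sum fun s a => jA a * (jG s : D) := by
  funext f
  rw [edL, Finsupp.lsum_apply]
  rfl

/-- The linear equivalence `(G →₀ a(C)) ≃ a(C)[G]`. -/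
noncomputable def edE (hD : IsSkewGroupAlgebra k G R σ D jA jG) : (G →₀ R) ≃ₗ[k] D :=
  LinearEquiv.ofBijective (edL jA jG) (by rw [edL_coe]; exact hD.2)

theorem edE_single (hD : IsSkewGroupAlgebra k G R σ D jA jG) (s : G) (a : R) :
    edE jA jG hD (Finsupp.single s a) = jA a * (jG s : D) := by
  show edL jA jG (Finsupp.single s a) = _
  rw [edL]
  exact Finsupp.lsum_single (S := k) _ _ _

theorem edE_symm_apply (hD : IsSkewGroupAlgebra k G R σ D jA jG) (s : G) (a : R) :
    (edE jA jG hD).symm (jA a * (jG s : D)) = Finsupp.single s a :=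
  (LinearEquiv.symm_apply_eq _).2 (edE_single jA jG hD s a).symm

/-- The inverse map `a(C)[G] → a(C[G])`. -/
noncomputable def PhiL (hR : IsCatAlgebra k C R ι)
    (κ : ∀ x y : C.Obj, A.SkewHom x y →ₗ[k] S)
    (hD : IsSkewGroupAlgebra k G R σ D jA jG) : D →ₗ[k] S :=
  (Finsupp.lsum k fun s : G =>
    (DFinsupp.lsum k (M := fun p : C.Obj × C.Obj => C.Hom p.1 p.2) (N := S) fun p =>
      (κ (A.smulObj s⁻¹ p.1) p.2) ∘ₗ
        (dsLof k (fun t : G => C.Hom (A.smulObj t (A.smulObj s⁻¹ p.1)) p.2) s) ∘ₗ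
        trans2L (A.smul_smul_inv s p.1).symm rfl) ∘ₗ
      (catEquiv hR).symm.toLinearMap) ∘ₗ
    (edE jA jG hD).symm.toLinearMap

theorem PhiL_apply (hR : IsCatAlgebra k C R ι)
    (κ : ∀ x y : C.Obj, A.SkewHom x y →ₗ[k] S)
    (hD : IsSkewGroupAlgebra k G R σ D jA jG) (u y : C.Obj) (f : C.Hom u y) (s : G) :
    PhiL A ι jA jG hR κ hD (jA (ι u y f) * (jG s : D)) =
      κ (A.smulObj s⁻¹ u) y
        (A.skewSingle s (trans2L (A.smul_smul_inv s u).symm rfl f)) := by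
  have h1 : PhiL A ι jA jG hR κ hD (jA (ι u y f) * (jG s : D))
      = (Finsupp.lsum k fun s : G =>
          (DFinsupp.lsum k (M := fun p : C.Obj × C.Obj => C.Hom p.1 p.2) (N := S) fun p =>
            (κ (A.smulObj s⁻¹ p.1) p.2) ∘ₗ
              (dsLof k (fun t : G => C.Hom (A.smulObj t (A.smulObj s⁻¹ p.1)) p.2) s) ∘ₗ
              trans2L (A.smul_smul_inv s p.1).symm rfl) ∘ₗ
            (catEquiv hR).symm.toLinearMap)
        (Finsupp.single s (ι u y f)) :=
    congrArg (fun z => (Finsupp.lsum k fun s : G =>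
          (DFinsupp.lsum k (M := fun p : C.Obj × C.Obj => C.Hom p.1 p.2) (N := S) fun p =>
            (κ (A.smulObj s⁻¹ p.1) p.2) ∘ₗ
              (dsLof k (fun t : G => C.Hom (A.smulObj t (A.smulObj s⁻¹ p.1)) p.2) s) ∘ₗ
              trans2L (A.smul_smul_inv s p.1).symm rfl) ∘ₗ
            (catEquiv hR).symm.toLinearMap) z) (edE_symm_apply jA jG hD s (ι u y f))
  rw [h1, Finsupp.lsum_single]
  have h2 : ((DFinsupp.lsum k (M := fun p : C.Obj × C.Obj => C.Hom p.1 p.2) (N := S) fun p =>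
            (κ (A.smulObj s⁻¹ p.1) p.2) ∘ₗ
              (dsLof k (fun t : G => C.Hom (A.smulObj t (A.smulObj s⁻¹ p.1)) p.2) s) ∘ₗ
              trans2L (A.smul_smul_inv s p.1).symm rfl) ∘ₗ
            (catEquiv hR).symm.toLinearMap) (ι u y f)
      = (DFinsupp.lsum k (M := fun p : C.Obj × C.Obj => C.Hom p.1 p.2) (N := S) fun p =>
            (κ (A.smulObj s⁻¹ p.1) p.2) ∘ₗ
              (dsLof k (fun t : G => C.Hom (A.smulObj t (A.smulObj s⁻¹ p.1)) p.2) s) ∘ₗ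
              trans2L (A.smul_smul_inv s p.1).symm rfl)
          (DFinsupp.single (⟨u, y⟩ : C.Obj × C.Obj) f) :=
    congrArg (fun z => (DFinsupp.lsum k (M := fun p : C.Obj × C.Obj => C.Hom p.1 p.2) (N := S) fun p =>
            (κ (A.smulObj s⁻¹ p.1) p.2) ∘ₗ
              (dsLof k (fun t : G => C.Hom (A.smulObj t (A.smulObj s⁻¹ p.1)) p.2) s) ∘ₗ
              trans2L (A.smul_smul_inv s p.1).symm rfl) z) (catEquiv_symm_apply hR u y f)
  rw [h2]
  exact DFinsupp.lsum_single (S := k) _ _ _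

end MainAux

/-- **Proposition (Cibils–Marcos).** Let `G` be a finite group and `C` a `G`-category
over `k` with finitely many objects, and let `a(C)` be the associated matrix
`k`-algebra. Then `G` acts on `a(C)` by algebra automorphisms (by `s·ι(f) = ι(s·f)`),
and the algebra `a(C[G])` of the skew category is isomorphic to the skew group algebra
`a(C)[G]`; an isomorphism sends the elementary morphism `f ∈ Hom_C(s·x, y)`, viewed in
the `s`-component of `Hom_{C[G]}(x,y)`, to `f ⊗ s`. -/
theorem catAlgebra_skew_iso_skewGroupAlgebra (k G : Type) [CommRing k] [Group G]
    [Finite G] (C : kCat k) [Finite C.Obj] (A : GAction k G C)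
    (R : Type) [Ring R] [Algebra k R] (ι : ∀ x y : C.Obj, C.Hom x y →ₗ[k] R)
    (hR : IsCatAlgebra k C R ι) :
    -- `G` acts on `a(C)` by algebra automorphisms
    (∃ σ : G →* (R ≃ₐ[k] R), ∀ (s : G) (x y : C.Obj) (f : C.Hom x y),
        σ s (ι x y f) = ι (A.smulObj s x) (A.smulObj s y) (A.smulHom s x y f)) ∧
    -- and `a(C[G]) ≃ a(C)[G]`
    (∀ σ : G →* (R ≃ₐ[k] R),
      (∀ (s : G) (x y : C.Obj) (f : C.Hom x y),
        σ s (ι x y f) = ι (A.smulObj s x) (A.smulObj s y) (A.smulHom s x y f)) →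
      ∀ (Ss : SkewStr A) (S : Type) [Ring S] [Algebra k S]
        (κ : ∀ x y : C.Obj, A.SkewHom x y →ₗ[k] S),
        IsCatAlgebra k Ss.toKCat S κ →
        ∀ (D : Type) [Ring D] [Algebra k D] (jA : R →ₐ[k] D) (jG : G →* Dˣ),
          IsSkewGroupAlgebra k G R σ D jA jG →
          ∃ ψ : S ≃ₐ[k] D, ∀ (x y : C.Obj) (s : G) (f : C.Hom (A.smulObj s x) y),
            ψ (κ x y (A.skewSingle s f)) = jA (ι (A.smulObj s x) y f) * (jG s : D)) := by
  constructor
  · -- Part 1: the action of `G` on `a(C)` by algebra automorphisms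
    have genmul : ∀ (s : G) (x y : C.Obj) (f : C.Hom x y) (x' y' : C.Obj) (f' : C.Hom x' y'),
        sigmaL A ι hR s (ι x' y' f' * ι x y f)
          = sigmaL A ι hR s (ι x' y' f') * sigmaL A ι hR s (ι x y f) := by
      intro s x y f x' y' f'
      by_cases hyy : y = x'
      · subst hyy
        rw [hR.1, sigmaL_apply, sigmaL_apply, sigmaL_apply, hR.1, ← A.smulHom_comp]
      · rw [hR.2.1 f' f hyy, map_zero, sigmaL_apply, sigmaL_apply,
          hR.2.1 _ _ (fun hc => hyy (A.smul_left_cancel hc))]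
    have extR : ∀ (φ ψ : R →ₗ[k] R),
        (∀ r ∈ {r : R | ∃ x y f, r = ι x y f}, φ r = ψ r) → φ = ψ := by
      intro φ ψ H
      refine cat_ext hR fun x y f => H _ ⟨x, y, f, rfl⟩
    have mulL : ∀ (s : G) (a b : R),
        sigmaL A ι hR s (a * b) = sigmaL A ι hR s a * sigmaL A ι hR s b := by
      intro s a b
      refine mul_of_gens (sigmaL A ι hR s) {r : R | ∃ x y f, r = ι x y f} extR ?_ a b
      rintro t ht u hu
      obtain ⟨x, y, f, rfl⟩ := ht
      obtain ⟨x', y', f', rfl⟩ := hu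
      exact genmul s x y f x' y' f'
    have invL : ∀ s : G, sigmaL A ι hR s⁻¹ ∘ₗ sigmaL A ι hR s = LinearMap.id := by
      intro s
      apply cat_ext hR
      intro x y f
      simp only [LinearMap.comp_apply, LinearMap.id_coe, id_eq]
      rw [sigmaL_apply, sigmaL_apply]
      refine homFam_congr (fun x y f => ι x y f) (A.smul_inv_smul s x) (A.smul_inv_smul s y) ?_
      refine HEq.trans (HEq.symm (A.mul_smulHom s⁻¹ s f)) ?_
      have h1 : s⁻¹ * s = 1 := inv_mul_cancel s
      rw [h1]
      exact A.one_smulHom f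
    have invL' : ∀ s : G, sigmaL A ι hR s ∘ₗ sigmaL A ι hR s⁻¹ = LinearMap.id := by
      intro s
      have h2 := invL s⁻¹
      rwa [inv_inv] at h2
    have oneL : ∀ s : G, sigmaL A ι hR s 1 = 1 := by
      intro s
      have hv' : sigmaL A ι hR s (sigmaL A ι hR s⁻¹ 1) = 1 := by
        simpa only [LinearMap.comp_apply, LinearMap.id_coe, id_eq] using
          LinearMap.congr_fun (invL' s) 1
      calc sigmaL A ι hR s 1 = 1 * sigmaL A ι hR s 1 := (one_mul _).symm
        _ = sigmaL A ι hR s (sigmaL A ι hR s⁻¹ 1) * sigmaL A ι hR s 1 := by rw [hv']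
        _ = sigmaL A ι hR s (sigmaL A ι hR s⁻¹ 1 * 1) := (mulL s _ 1).symm
        _ = 1 := by rw [mul_one, hv']
    have ext_alg : ∀ (e₁ e₂ : R ≃ₐ[k] R), (∀ x y (f : C.Hom x y),
        e₁ (ι x y f) = e₂ (ι x y f)) → e₁ = e₂ := by
      intro e₁ e₂ h
      apply AlgEquiv.ext
      intro r
      exact LinearMap.congr_fun
        (cat_ext hR (φ := e₁.toLinearMap) (ψ := e₂.toLinearMap) h) r
    refine ⟨MonoidHom.mk (OneHom.mk (fun s => AlgEquiv.ofLinearEquiv (LinearEquiv.ofLinear (sigmaL A ι hR s) (sigmaL A ι hR s⁻¹) (invL' s) (invL s)) (oneL s) (mulL s)) ?_) ?_, ?_⟩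
    · apply ext_alg
      intro x y f
      simp only [AlgEquiv.ofLinearEquiv_apply, LinearEquiv.ofLinear_apply, AlgEquiv.one_apply]
      show sigmaL A ι hR 1 (ι x y f) = ι x y f
      rw [sigmaL_apply]
      exact homFam_congr (fun x y f => ι x y f) (A.one_smulObj x) (A.one_smulObj y)
        (A.one_smulHom f)
    · intro s t
      apply ext_alg
      intro x y f
      simp only [AlgEquiv.ofLinearEquiv_apply, LinearEquiv.ofLinear_apply, AlgEquiv.mul_apply]
      show sigmaL A ι hR (s * t) (ι x y f) = sigmaL A ι hR s (sigmaL A ι hR t (ι x y f))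
      rw [sigmaL_apply, sigmaL_apply, sigmaL_apply]
      exact homFam_congr (fun x y f => ι x y f) (A.mul_smulObj s t x) (A.mul_smulObj s t y)
        (A.mul_smulHom s t f)
    · intro s x y f
      simp only [MonoidHom.coe_mk, OneHom.coe_mk, AlgEquiv.ofLinearEquiv_apply,
        LinearEquiv.ofLinear_apply]
      show sigmaL A ι hR s (ι x y f) = _
      rw [sigmaL_apply]
  · -- Part 2: `a(C[G]) ≃ a(C)[G]`
    intro σ σprop Ss S iS aS κ hS D iD aD jA jG hD
    have extS : ∀ {M : Type} [AddCommGroup M] [Module k M] (φ ψ : S →ₗ[k] M),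
        (∀ (x y : C.Obj) (s : G) (f : C.Hom (A.smulObj s x) y),
          φ (κ x y (A.skewSingle s f)) = ψ (κ x y (A.skewSingle s f))) → φ = ψ := by
      intro M _ _ φ ψ h
      apply cat_ext hS
      intro (x : C.Obj) (y : C.Obj) (f : A.SkewHom x y)
      have e : (φ ∘ₗ κ x y : (Π₀ s : G, C.Hom (A.smulObj s x) y) →ₗ[k] M)
          = (ψ ∘ₗ κ x y : (Π₀ s : G, C.Hom (A.smulObj s x) y) →ₗ[k] M) :=
        DFinsupp.lhom_ext fun s g => h x y s g
      exact LinearMap.congr_fun e f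
    have Ψgen : ∀ (x y : C.Obj) (s : G) (f : C.Hom (A.smulObj s x) y),
        PsiL A ι jA jG hS (κ x y (A.skewSingle s f))
          = jA (ι (A.smulObj s x) y f) * (jG s : D) :=
      fun x y s f => PsiL_apply A ι jA jG hS x y s f
    have hSmul : ∀ (x y z : C.Obj) (g : A.SkewHom y z) (f : A.SkewHom x y),
        κ y z g * κ x y f = κ x z (Ss.comp g f) := fun x y z g f => hS.1 g f
    have hSzero : ∀ (x y y' z : C.Obj) (g : A.SkewHom y' z) (f : A.SkewHom x y), y ≠ y' →
        κ y' z g * κ x y f = 0 := fun x y y' z g f h => hS.2.1 g f h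
    have Ψmulgen : ∀ (x y : C.Obj) (s : G) (f : C.Hom (A.smulObj s x) y)
        (x' y' : C.Obj) (t : G) (g : C.Hom (A.smulObj t x') y'),
        PsiL A ι jA jG hS (κ x' y' (A.skewSingle t g) * κ x y (A.skewSingle s f))
          = PsiL A ι jA jG hS (κ x' y' (A.skewSingle t g))
            * PsiL A ι jA jG hS (κ x y (A.skewSingle s f)) := by
      intro x y s f x' y' t g
      rw [Ψgen x' y' t g, Ψgen x y s f]
      by_cases hyy : y = x'
      · subst hyy
        have hcomp : Ss.comp (A.skewSingle t g) (A.skewSingle s f)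
            = A.skewSingle (t * s) (C.trans2 (A.mul_smulObj t s x).symm rfl
                (C.comp g (A.smulHom t (A.smulObj s x) y f))) := Ss.comp_single t s g f
        rw [hSmul x y y' (A.skewSingle t g) (A.skewSingle s f), hcomp, Ψgen]
        have step1 : ι (A.smulObj (t * s) x) y'
              (C.trans2 (A.mul_smulObj t s x).symm rfl
                (C.comp g (A.smulHom t (A.smulObj s x) y f)))
            = ι (A.smulObj t (A.smulObj s x)) y'
                (C.comp g (A.smulHom t (A.smulObj s x) y f)) :=
          homFam_congr (fun a b h => ι a b h) (A.mul_smulObj t s x) rfl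
            (kCat.trans2_heq _ _ _)
        rw [step1, ← hR.1 g (A.smulHom t (A.smulObj s x) y f), map_mul, map_mul,
          Units.val_mul]
        rw [mul_assoc (jA (ι (A.smulObj t y) y' g)) ((jG t : Dˣ) : D),
          ← mul_assoc ((jG t : Dˣ) : D) (jA (ι (A.smulObj s x) y f)) ((jG s : Dˣ) : D),
          hD.1 t (ι (A.smulObj s x) y f), σprop t]
        simp only [mul_assoc]
      · rw [hSzero x y x' y' (A.skewSingle t g) (A.skewSingle s f) hyy, map_zero]
        rw [mul_assoc (jA (ι (A.smulObj t x') y' g)) ((jG t : Dˣ) : D),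
          ← mul_assoc ((jG t : Dˣ) : D) (jA (ι (A.smulObj s x) y f)) ((jG s : Dˣ) : D),
          hD.1 t (ι (A.smulObj s x) y f), σprop t,
          ← mul_assoc (jA (ι (A.smulObj t x') y' g)),
          ← mul_assoc (jA (ι (A.smulObj t x') y' g)),
          ← map_mul jA,
          hR.2.1 _ _ (fun hc => hyy (A.smul_left_cancel hc)), map_zero, zero_mul, zero_mul]
    have extS' : ∀ (φ ψ : S →ₗ[k] D),
        (∀ u ∈ {u : S | ∃ x y s f, u = κ x y (A.skewSingle s f)}, φ u = ψ u) → φ = ψ := by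
      intro φ ψ H
      exact extS φ ψ fun x y s f => H _ ⟨x, y, s, f, rfl⟩
    have Ψmul : ∀ a b : S,
        PsiL A ι jA jG hS (a * b) = PsiL A ι jA jG hS a * PsiL A ι jA jG hS b := by
      intro a b
      refine mul_of_gens (PsiL A ι jA jG hS)
        {u : S | ∃ x y s f, u = κ x y (A.skewSingle s f)} extS' ?_ a b
      rintro u hu v hv
      obtain ⟨x, y, s, f, rfl⟩ := hu
      obtain ⟨x', y', t, g, rfl⟩ := hv
      exact Ψmulgen x y s f x' y' t g
    have Φgen : ∀ (u y : C.Obj) (f : C.Hom u y) (s : G),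
        PhiL A ι jA jG hR κ hD (jA (ι u y f) * (jG s : D))
          = κ (A.smulObj s⁻¹ u) y
              (A.skewSingle s (trans2L (A.smul_smul_inv s u).symm rfl f)) :=
      fun u y f s => PhiL_apply A ι jA jG hR κ hD u y f s
    have extD : ∀ {M : Type} [AddCommGroup M] [Module k M] (φ ψ : D →ₗ[k] M),
        (∀ (u y : C.Obj) (f : C.Hom u y) (s : G),
          φ (jA (ι u y f) * (jG s : D)) = ψ (jA (ι u y f) * (jG s : D))) → φ = ψ := by
      intro M _ _ φ ψ h
      have key : φ ∘ₗ (edE (σ := σ) jA jG hD).toLinearMap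
          = ψ ∘ₗ (edE (σ := σ) jA jG hD).toLinearMap := by
        apply Finsupp.lhom_ext
        intro s a
        simp only [LinearMap.comp_apply, LinearEquiv.coe_coe, edE_single jA jG hD]
        exact LinearMap.congr_fun
          (cat_ext hR
            (φ := φ ∘ₗ LinearMap.mulRight k ((jG s : Dˣ) : D) ∘ₗ jA.toLinearMap)
            (ψ := ψ ∘ₗ LinearMap.mulRight k ((jG s : Dˣ) : D) ∘ₗ jA.toLinearMap)
            (fun x y f => by
              simpa only [LinearMap.comp_apply, LinearMap.mulRight_apply,
                AlgHom.toLinearMap_apply] using h x y f s)) a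
      apply LinearMap.ext
      intro d
      obtain ⟨w, rfl⟩ := (edE (σ := σ) jA jG hD).surjective d
      exact LinearMap.congr_fun key w
    have compSD : PsiL A ι jA jG hS ∘ₗ PhiL A ι jA jG hR κ hD = LinearMap.id := by
      apply extD
      intro u y f s
      simp only [LinearMap.comp_apply, LinearMap.id_coe, id_eq]
      rw [Φgen, Ψgen]
      exact congrArg (fun r => r * ((jG s : Dˣ) : D))
        (congrArg jA (homFam_congr (fun a b h => ι a b h) (A.smul_smul_inv s u) rfl
          (trans2L_heq _ _ f)))
    have compDS : PhiL A ι jA jG hR κ hD ∘ₗ PsiL A ι jA jG hS = LinearMap.id := by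
      apply extS
      intro x y s f
      simp only [LinearMap.comp_apply, LinearMap.id_coe, id_eq]
      rw [Ψgen, Φgen]
      have hcongr : ∀ (x₁ x₂ : C.Obj) (hx : x₁ = x₂) (F₁ : C.Hom (A.smulObj s x₁) y)
          (F₂ : C.Hom (A.smulObj s x₂) y), HEq F₁ F₂ →
          κ x₁ y (A.skewSingle s F₁) = κ x₂ y (A.skewSingle s F₂) := by
        intro x₁ x₂ hx
        subst hx
        intro F₁ F₂ hF
        rw [eq_of_heq hF]
      exact hcongr _ _ (A.smul_inv_smul s x) _ _ (trans2L_heq _ _ f)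
    have Ψone : PsiL A ι jA jG hS 1 = 1 := by
      have hv' : PsiL A ι jA jG hS (PhiL A ι jA jG hR κ hD 1) = 1 := by
        simpa only [LinearMap.comp_apply, LinearMap.id_coe, id_eq] using
          LinearMap.congr_fun compSD 1
      calc PsiL A ι jA jG hS 1 = 1 * PsiL A ι jA jG hS 1 := (one_mul _).symm
        _ = PsiL A ι jA jG hS (PhiL A ι jA jG hR κ hD 1) * PsiL A ι jA jG hS 1 := by rw [hv']
        _ = PsiL A ι jA jG hS (PhiL A ι jA jG hR κ hD 1 * 1) := (Ψmul _ 1).symm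
        _ = 1 := by rw [mul_one, hv']
    refine ⟨AlgEquiv.ofLinearEquiv
      (LinearEquiv.ofLinear (PsiL A ι jA jG hS) (PhiL A ι jA jG hR κ hD) compSD compDS)
      Ψone Ψmul, ?_⟩
    intro x y s f
    show PsiL A ι jA jG hS (κ x y (A.skewSingle s f)) = _
    exact Ψgen x y s f
end

section
/- Let C be a free G-category over a commutative ring k. Choose one object x_α in each G-orbit α, and let ⟨C[G]⟩ denote the full subcategory of the skew category C[G] on these chosen objects. Then the quotient category C/G and ⟨C[G]⟩ are isomorphic k-categories: the bijection α ↦ x_α on objects together with the canonical k-module isomorphisms Hom_{C/G}(α,β) ≅ ⊕_{s∈G} Hom_C(s·x_α, x_β) = Hom_{C[G]}(x_α, x_β) define an isomorphism of categories. -/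
/-! Direct sum helpers. -/

open DirectSum

/-! Auxiliary development for the proof. -/

namespace CMAux

open GAction

variable {k G : Type} [CommRing k] [Group G] {C : kCat k}

theorem heq_trans2 (C : kCat k) {x x' y y' : C.Obj} (hx : x = x') (hy : y = y')
    (f : C.Hom x y) : HEq (C.trans2 hx hy f) f := cast_heq _ _

theorem comp_heq (C : kCat k) {x x' y y' z z' : C.Obj} (hx : x = x') (hy : y = y')
    (hz : z = z') {g : C.Hom y z} {g' : C.Hom y' z'} {f : C.Hom x y} {f' : C.Hom x' y'}
    (hg : HEq g g') (hf : HEq f f') : HEq (C.comp g f) (C.comp g' f') := by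
  subst hx; subst hy; subst hz
  rw [eq_of_heq hg, eq_of_heq hf]

theorem smulHom_heq (A : GAction k G C) (s : G) {x x' y y' : C.Obj} (hx : x = x')
    (hy : y = y') {f : C.Hom x y} {f' : C.Hom x' y'} (hf : HEq f f') :
    HEq (A.smulHom s x y f) (A.smulHom s x' y' f') := by
  subst hx; subst hy; rw [eq_of_heq hf]

/-- Cancellation for a free action. -/
theorem smul_cancel (A : GAction k G C) (hfree : A.IsFree) {s t : G} {x : C.Obj}
    (h : A.smulObj s x = A.smulObj t x) : s = t := by
  have h2 : A.smulObj (t⁻¹ * s) x = x := by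
    rw [A.mul_smulObj, h, ← A.mul_smulObj, inv_mul_cancel, A.one_smulObj]
  have := hfree _ _ h2
  rwa [inv_mul_eq_one, eq_comm] at this

theorem exists_smul_eq (A : GAction k G C) {x y : C.Obj} (h : A.orb x = A.orb y) :
    ∃ s : G, A.smulObj s x = y :=
  Quotient.exact h

variable (A : GAction k G C) (r : A.QuotObj → C.Obj) (hr : ∀ α, A.orb (r α) = α)

/-- chosen group element carrying `y` to the representative of its orbit target. -/
noncomputable def sSel {β : A.QuotObj} {y : C.Obj} (hy : A.orb y = β) : G :=
  Classical.choose (exists_smul_eq A (x := y) (y := r β) (by rw [hy, hr]))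

theorem sSel_spec {β : A.QuotObj} {y : C.Obj} (hy : A.orb y = β) :
    A.smulObj (sSel A r hr hy) y = r β :=
  Classical.choose_spec (exists_smul_eq A (x := y) (y := r β) (by rw [hy, hr]))

theorem sSel_unique (hfree : A.IsFree) {β : A.QuotObj} {y : C.Obj} (hy : A.orb y = β)
    {s : G} (hs : A.smulObj s y = r β) : s = sSel A r hr hy :=
  smul_cancel A hfree (hs.trans (sSel_spec A r hr hy).symm)

noncomputable def tSel {α : A.QuotObj} {x : C.Obj} (hx : A.orb x = α) (s : G) : G :=
  (sSel A r hr (β := α) (y := A.smulObj s x) ((A.orb_smul s x).trans hx))⁻¹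

theorem tSel_spec {α : A.QuotObj} {x : C.Obj} (hx : A.orb x = α) (s : G) :
    A.smulObj (tSel A r hr hx s) (r α) = A.smulObj s x := by
  have h := sSel_spec A r hr (β := α) (y := A.smulObj s x) ((A.orb_smul s x).trans hx)
  rw [tSel, ← h, ← A.mul_smulObj, inv_mul_cancel, A.one_smulObj]

theorem tSel_unique (hfree : A.IsFree) {α : A.QuotObj} {x : C.Obj} (hx : A.orb x = α)
    (s : G) {t : G} (ht : A.smulObj t (r α) = A.smulObj s x) :
    t = tSel A r hr hx s :=
  smul_cancel A hfree (ht.trans (tSel_spec A r hr hx s).symm)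

/-- Transport of morphisms as a linear map. -/
def transHomL (C : kCat k) {x x' y y' : C.Obj} (hx : x = x') (hy : y = y') :
    C.Hom x y →ₗ[k] C.Hom x' y' := by
  subst hx; subst hy; exact LinearMap.id

theorem transHomL_apply (C : kCat k) {x x' y y' : C.Obj} (hx : x = x') (hy : y = y')
    (f : C.Hom x y) : transHomL C hx hy f = C.trans2 hx hy f := by
  subst hx; subst hy
  exact (eq_of_heq (heq_trans2 C rfl rfl f)).symm

/-- Forward map on a single component. -/
noncomputable def fwdOf {α β : A.QuotObj} {x y : C.Obj} (hx : A.orb x = α)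
    (hy : A.orb y = β) : C.Hom x y →ₗ[k] A.SkewHom (r α) (r β) :=
  (dsLof k (fun u : G => C.Hom (A.smulObj u (r α)) (r β)) (tSel A r hr hx (sSel A r hr hy))).comp
    ((transHomL C (tSel_spec A r hr hx (sSel A r hr hy)).symm (sSel_spec A r hr hy)).comp
      (A.smulHom (sSel A r hr hy) x y))

theorem fwdOf_eq (hfree : A.IsFree) {α β : A.QuotObj} {x y : C.Obj} (hx : A.orb x = α)
    (hy : A.orb y = β) {s t : G} (hs : A.smulObj s y = r β)
    (ht : A.smulObj t (r α) = A.smulObj s x) (f : C.Hom x y) :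
    fwdOf A r hr hx hy f =
      A.skewSingle t (C.trans2 ht.symm hs (A.smulHom s x y f)) := by
  obtain rfl : s = sSel A r hr hy := sSel_unique A r hr hfree hy hs
  obtain rfl : t = tSel A r hr hx _ := tSel_unique A r hr hfree hx _ ht
  show A.skewSingle _ (transHomL C _ _ _) = _
  rw [transHomL_apply]

theorem dsToModule_single {ι : Type} {M : ι → Type} [∀ i, AddCommGroup (M i)]
    [∀ i, Module k (M i)] {N : Type} [AddCommGroup N] [Module k N]
    (φ : ∀ i, M i →ₗ[k] N) (i : ι) (m : M i) :
    letI := Classical.decEq ι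
    DirectSum.toModule k ι N φ (dsSingle i m) = φ i m := by
  letI := Classical.decEq ι
  exact DirectSum.toModule_lof k i m

/-- Forward map on the direct sum. -/
noncomputable def fwdSum (α β : A.QuotObj) : A.HomSum α β →ₗ[k] A.SkewHom (r α) (r β) :=
  letI := Classical.decEq (A.PairIdx α β)
  DirectSum.toModule k (A.PairIdx α β) _ (fun p => fwdOf A r hr p.1.2 p.2.2)

theorem fwdSum_single {α β : A.QuotObj} {x y : C.Obj} (hx : A.orb x = α)
    (hy : A.orb y = β) (f : C.Hom x y) :
    fwdSum A r hr α β (A.homSumSingle hx hy f) = fwdOf A r hr hx hy f := by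
  exact dsToModule_single (fun p : A.PairIdx α β => fwdOf A r hr p.1.2 p.2.2)
    (⟨⟨x, hx⟩, ⟨y, hy⟩⟩ : A.PairIdx α β) f

theorem skewSingle_heq_congr {x y : C.Obj} {t t' : G} (hT : t = t')
    {f : C.Hom (A.smulObj t x) y} {f' : C.Hom (A.smulObj t' x) y}
    (hf : HEq f f') : A.skewSingle t f = A.skewSingle t' f' := by
  subst hT; rw [eq_of_heq hf]

theorem fwdOf_smul (hfree : A.IsFree) {α β : A.QuotObj} {s : G} {x y : C.Obj}
    (hx : A.orb x = α) (hy : A.orb y = β) (f : C.Hom x y) :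
    fwdOf A r hr ((A.orb_smul s x).trans hx) ((A.orb_smul s y).trans hy)
        (A.smulHom s x y f) = fwdOf A r hr hx hy f := by
  set s0 := sSel A r hr hy with hs0
  set t0 := tSel A r hr hx s0 with ht0
  have hs0y : A.smulObj s0 y = r β := sSel_spec A r hr hy
  have ht0x : A.smulObj t0 (r α) = A.smulObj s0 x := tSel_spec A r hr hx s0
  have hs' : A.smulObj (s0 * s⁻¹) (A.smulObj s y) = r β := by
    rw [← A.mul_smulObj, mul_assoc, inv_mul_cancel, mul_one, hs0y]
  have ht' : A.smulObj t0 (r α) = A.smulObj (s0 * s⁻¹) (A.smulObj s x) := by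
    rw [← A.mul_smulObj, mul_assoc, inv_mul_cancel, mul_one, ht0x]
  rw [fwdOf_eq A r hr hfree _ _ hs' ht', fwdOf_eq A r hr hfree hx hy hs0y ht0x]
  apply skewSingle_heq_congr A rfl
  refine (heq_trans2 C _ _ _).trans (HEq.trans ?_ (heq_trans2 C _ _ _).symm)
  have h1 : HEq (A.smulHom (s0 * s⁻¹) _ _ (A.smulHom s x y f))
      (A.smulHom ((s0 * s⁻¹) * s) x y f) := (A.mul_smulHom (s0 * s⁻¹) s f).symm
  refine h1.trans ?_
  have : (s0 * s⁻¹) * s = s0 := by group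
  rw [this]

theorem fwd_ker (hfree : A.IsFree) (α β : A.QuotObj) :
    A.gSub α β ≤ LinearMap.ker (fwdSum A r hr α β) := by
  rw [GAction.gSub, Submodule.span_le]
  rintro z ⟨s, x, y, hx, hy, f, rfl⟩
  simp only [SetLike.mem_coe, LinearMap.mem_ker, map_sub]
  rw [fwdSum_single, fwdSum_single, fwdOf_smul A r hr hfree hx hy, sub_self]

/-- The forward map on the quotient module. -/
noncomputable def fwd (hfree : A.IsFree) (α β : A.QuotObj) :
    A.QuotHom α β →ₗ[k] A.SkewHom (r α) (r β) :=
  Submodule.liftQ (A.gSub α β) (fwdSum A r hr α β) (fwd_ker A r hr hfree α β)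

theorem fwd_proj (hfree : A.IsFree) {α β : A.QuotObj} {x y : C.Obj}
    (hx : A.orb x = α) (hy : A.orb y = β) (f : C.Hom x y) {s t : G}
    (hs : A.smulObj s y = r β) (ht : A.smulObj t (r α) = A.smulObj s x) :
    fwd A r hr hfree α β (A.proj hx hy f) =
      A.skewSingle t (C.trans2 ht.symm hs (A.smulHom s x y f)) := by
  have : fwd A r hr hfree α β (A.proj hx hy f)
      = fwdSum A r hr α β (A.homSumSingle hx hy f) :=
    Submodule.liftQ_apply _ _ _
  rw [this, fwdSum_single, fwdOf_eq A r hr hfree hx hy hs ht]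

/-- The backward map. -/
noncomputable def bwd (α β : A.QuotObj) : A.SkewHom (r α) (r β) →ₗ[k] A.QuotHom α β :=
  letI := Classical.decEq G
  DirectSum.toModule k G _ (fun t =>
    A.projL ((A.orb_smul t (r α)).trans (hr α)) (hr β))

theorem bwd_single {α β : A.QuotObj} (t : G) (f : C.Hom (A.smulObj t (r α)) (r β)) :
    bwd A r hr α β (A.skewSingle t f) =
      A.proj ((A.orb_smul t (r α)).trans (hr α)) (hr β) f := by
  exact dsToModule_single
    (fun t : G => A.projL ((A.orb_smul t (r α)).trans (hr α)) (hr β)) t f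

theorem proj_trans2 {α β : A.QuotObj} {x x' y y' : C.Obj} (e1 : x = x') (e2 : y = y')
    (hx : A.orb x = α) (hy : A.orb y = β) (hx' : A.orb x' = α) (hy' : A.orb y' = β)
    (f : C.Hom x y) :
    A.proj hx' hy' (C.trans2 e1 e2 f) = A.proj hx hy f := by
  subst e1; subst e2
  exact congrArg _ (eq_of_heq (heq_trans2 C rfl rfl f))

theorem proj_smul {α β : A.QuotObj} (s : G) {x y : C.Obj} (hx : A.orb x = α)
    (hy : A.orb y = β) (f : C.Hom x y) :
    A.proj ((A.orb_smul s x).trans hx) ((A.orb_smul s y).trans hy)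
        (A.smulHom s x y f) = A.proj hx hy f := by
  show Submodule.Quotient.mk _ = Submodule.Quotient.mk _
  rw [Submodule.Quotient.eq]
  exact Submodule.subset_span ⟨s, x, y, hx, hy, f, rfl⟩

theorem bwd_fwd (hfree : A.IsFree) {α β : A.QuotObj} (q : A.QuotHom α β) :
    bwd A r hr α β (fwd A r hr hfree α β q) = q := by
  have : (bwd A r hr α β).comp (fwd A r hr hfree α β) = LinearMap.id := by
    apply Submodule.linearMap_qext
    letI := Classical.decEq (A.PairIdx α β)
    apply DirectSum.linearMap_ext
    rintro ⟨⟨x, hx⟩, ⟨y, hy⟩⟩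
    ext f
    show bwd A r hr α β (fwd A r hr hfree α β (A.proj hx hy f)) = A.proj hx hy f
    set s0 := sSel A r hr hy with hs0
    set t0 := tSel A r hr hx s0 with ht0
    have hs0y : A.smulObj s0 y = r β := sSel_spec A r hr hy
    have ht0x : A.smulObj t0 (r α) = A.smulObj s0 x := tSel_spec A r hr hx s0
    rw [fwd_proj A r hr hfree hx hy f hs0y ht0x, bwd_single,
      proj_trans2 A (x := A.smulObj s0 x) (y := A.smulObj s0 y) ht0x.symm hs0y
        ((A.orb_smul s0 x).trans hx) ((A.orb_smul s0 y).trans hy) _ _,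
      proj_smul]
  exact LinearMap.congr_fun this q

theorem fwd_bwd (hfree : A.IsFree) {α β : A.QuotObj} (w : A.SkewHom (r α) (r β)) :
    fwd A r hr hfree α β (bwd A r hr α β w) = w := by
  have : (fwd A r hr hfree α β).comp (bwd A r hr α β) = LinearMap.id := by
    letI := Classical.decEq G
    apply DirectSum.linearMap_ext
    intro t
    ext f
    show fwd A r hr hfree α β (bwd A r hr α β (A.skewSingle t f)) = A.skewSingle t f
    rw [bwd_single]
    have hs : A.smulObj (1 : G) (r β) = r β := A.one_smulObj _
    have ht : A.smulObj t (r α) = A.smulObj (1 : G) (A.smulObj t (r α)) :=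
      (A.one_smulObj _).symm
    rw [fwd_proj A r hr hfree _ _ f hs ht]
    apply skewSingle_heq_congr A rfl
    exact (heq_trans2 C _ _ _).trans (A.one_smulHom f)
  exact LinearMap.congr_fun this w

variable (Q : QuotStr A) (S : SkewStr A)

theorem fwd_id (hfree : A.IsFree) (α : A.QuotObj) :
    fwd A r hr hfree α α (Q.id α) = S.id (r α) := by
  rw [Q.id_proj (hr α)]
  have hs : A.smulObj (1 : G) (r α) = r α := A.one_smulObj _
  have ht : A.smulObj (1 : G) (r α) = A.smulObj (1 : G) (r α) := rfl
  rw [fwd_proj A r hr hfree _ _ _ hs ht, S.id_single]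
  apply skewSingle_heq_congr A rfl
  exact (heq_trans2 C _ _ _).trans ((A.one_smulHom _).trans (heq_trans2 C _ _ _).symm)

/-- Composition with a fixed morphism on the right, as a linear map (quotient cat). -/
noncomputable def QcompL {α β γ : A.QuotObj} (f : A.QuotHom α β) :
    A.QuotHom β γ →ₗ[k] A.QuotHom α γ where
  toFun g := Q.comp g f
  map_add' g g' := Q.comp_add_left g g' f
  map_smul' a g := Q.comp_smul_left a g f

/-- Composition with a fixed morphism on the left, as a linear map (quotient cat). -/
noncomputable def QcompR {α β γ : A.QuotObj} (g : A.QuotHom β γ) :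
    A.QuotHom α β →ₗ[k] A.QuotHom α γ where
  toFun f := Q.comp g f
  map_add' f f' := Q.comp_add_right g f f'
  map_smul' a f := Q.comp_smul_right a g f

/-- Composition with a fixed morphism on the right, as a linear map (skew cat). -/
noncomputable def ScompL {x y z : C.Obj} (f : A.SkewHom x y) :
    A.SkewHom y z →ₗ[k] A.SkewHom x z where
  toFun g := S.comp g f
  map_add' g g' := S.comp_add_left g g' f
  map_smul' a g := S.comp_smul_left a g f

/-- Composition with a fixed morphism on the left, as a linear map (skew cat). -/
noncomputable def ScompR {x y z : C.Obj} (g : A.SkewHom y z) :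
    A.SkewHom x y →ₗ[k] A.SkewHom x z where
  toFun f := S.comp g f
  map_add' f f' := S.comp_add_right g f f'
  map_smul' a f := S.comp_smul_right a g f

theorem fwd_comp_core (hfree : A.IsFree) {α β γ : A.QuotObj} {x y y' z : C.Obj}
    (hx : A.orb x = α) (hy : A.orb y = β) (hy' : A.orb y' = β) (hz : A.orb z = γ)
    (g : C.Hom y' z) (f : C.Hom x y) :
    fwd A r hr hfree α γ (Q.comp (A.proj hy' hz g) (A.proj hx hy f)) =
      S.comp (fwd A r hr hfree β γ (A.proj hy' hz g))
        (fwd A r hr hfree α β (A.proj hx hy f)) := by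
  obtain ⟨u, hu⟩ : ∃ u : G, A.smulObj u y = y' := exists_smul_eq A (hy.trans hy'.symm)
  set f' : C.Hom (A.smulObj u x) y' := C.trans2 rfl hu (A.smulHom u x y f) with hf'
  have e1 : A.proj hx hy f = A.proj ((A.orb_smul u x).trans hx) hy' f' := by
    rw [hf', proj_trans2 A rfl hu ((A.orb_smul u x).trans hx) ((A.orb_smul u y).trans hy),
      proj_smul]
  -- selected elements
  set sg := sSel A r hr hz with hsg
  set tg := tSel A r hr hy' sg with htg
  set sf := sSel A r hr hy with hsf
  set tf := tSel A r hr hx sf with htf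
  have hsgz : A.smulObj sg z = r γ := sSel_spec A r hr hz
  have htgy : A.smulObj tg (r β) = A.smulObj sg y' := tSel_spec A r hr hy' sg
  have hsfy : A.smulObj sf y = r β := sSel_spec A r hr hy
  have htfx : A.smulObj tf (r α) = A.smulObj sf x := tSel_spec A r hr hx sf
  have key : sg * u = tg * sf := by
    apply smul_cancel A hfree (x := y)
    rw [A.mul_smulObj, A.mul_smulObj, hu, hsfy, htgy]
  have ht2 : A.smulObj (tg * tf) (r α) = A.smulObj sg (A.smulObj u x) := by
    rw [A.mul_smulObj, htfx, ← A.mul_smulObj, ← key, A.mul_smulObj]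
  rw [fwd_proj A r hr hfree hx hy f hsfy htfx, e1, Q.comp_proj,
    fwd_proj A r hr hfree _ _ _ hsgz ht2,
    fwd_proj A r hr hfree _ _ _ hsgz htgy, S.comp_single]
  apply skewSingle_heq_congr A rfl
  refine (heq_trans2 C _ _ _).trans (HEq.trans ?_ (heq_trans2 C _ _ _).symm)
  -- LHS : smulHom sg (C.comp g f'); RHS : C.comp (trans2 .. smulHom sg g)
  --        (smulHom tg (trans2 .. smulHom sf f))
  have hsf' : HEq (A.smulHom sg _ _ f') (A.smulHom tg _ _
      (C.trans2 htfx.symm hsfy (A.smulHom sf x y f))) := by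
    have h1 : HEq (A.smulHom sg _ _ f') (A.smulHom sg _ _ (A.smulHom u x y f)) :=
      smulHom_heq A sg rfl hu.symm (heq_trans2 C _ _ _)
    have h2 : HEq (A.smulHom sg _ _ (A.smulHom u x y f)) (A.smulHom (sg * u) x y f) :=
      (A.mul_smulHom sg u f).symm
    have h3 : HEq (A.smulHom (tg * sf) x y f)
        (A.smulHom tg _ _ (A.smulHom sf x y f)) := A.mul_smulHom tg sf f
    have h4 : HEq (A.smulHom tg _ _ (A.smulHom sf x y f)) (A.smulHom tg _ _
        (C.trans2 htfx.symm hsfy (A.smulHom sf x y f))) :=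
      smulHom_heq A tg htfx.symm hsfy (heq_trans2 C _ _ _).symm
    rw [key] at h2
    exact (h1.trans h2).trans (h3.trans h4)
  rw [A.smulHom_comp]
  exact comp_heq C (ht2.symm.trans (A.mul_smulObj tg tf (r α))) htgy.symm hsgz
    (heq_trans2 C _ _ _).symm hsf'

theorem fwd_comp (hfree : A.IsFree) {α β γ : A.QuotObj} (g : A.QuotHom β γ)
    (f : A.QuotHom α β) :
    fwd A r hr hfree α γ (Q.comp g f) =
      S.comp (fwd A r hr hfree β γ g) (fwd A r hr hfree α β f) := by
  suffices h : ∀ {x y : C.Obj} (hx : A.orb x = α) (hy : A.orb y = β)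
      (f0 : C.Hom x y),
      fwd A r hr hfree α γ (Q.comp g (A.proj hx hy f0)) =
        S.comp (fwd A r hr hfree β γ g) (fwd A r hr hfree α β (A.proj hx hy f0)) by
    have hmaps : (fwd A r hr hfree α γ).comp (QcompR A Q g) =
        (ScompR A S (fwd A r hr hfree β γ g)).comp (fwd A r hr hfree α β) := by
      apply Submodule.linearMap_qext
      letI := Classical.decEq (A.PairIdx α β)
      apply DirectSum.linearMap_ext
      rintro ⟨⟨x, hx⟩, ⟨y, hy⟩⟩
      ext f0
      exact h hx hy f0
    exact LinearMap.congr_fun hmaps f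
  intro x y hx hy f0
  have hmaps : (fwd A r hr hfree α γ).comp (QcompL A Q (A.proj hx hy f0)) =
      (ScompL A S (fwd A r hr hfree α β (A.proj hx hy f0))).comp
        (fwd A r hr hfree β γ) := by
    apply Submodule.linearMap_qext
    letI := Classical.decEq (A.PairIdx β γ)
    apply DirectSum.linearMap_ext
    rintro ⟨⟨y', hy'⟩, ⟨z, hz⟩⟩
    ext g0
    exact fwd_comp_core A r hr Q S hfree hx hy hy' hz g0 f0
  exact LinearMap.congr_fun hmaps g

end CMAux
/-- **Proposition (Cibils–Marcos).** Let `C` be a free `G`-category over `k`. Choose a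
representative `r α` in each orbit `α` and let `⟨C[G]⟩` be the full subcategory of the
skew category `C[G]` on these objects. Then the quotient category `C/G` and `⟨C[G]⟩`
are isomorphic categories over `k`: on objects `α ↦ r α`, and on morphisms via the
canonical isomorphisms `Hom_{C/G}(α,β) ≅ ⊕_{s∈G} Hom_C(s·(r α), r β) = Hom_{C[G]}(r α, r β)`. -/
theorem quot_iso_fullsub_skew (k G : Type) [CommRing k] [Group G]
    (C : kCat k) (A : GAction k G C) (hfree : A.IsFree)
    (Q : QuotStr A) (S : SkewStr A)
    (r : A.QuotObj → C.Obj) (hr : ∀ α, A.orb (r α) = α) :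
    ∃ I : kCatIso k Q.toKCat (S.toKCat.fullSub (fun x => ∃ α, r α = x)),
      (∀ α : A.QuotObj, (I.F.obj α).1 = r α) ∧
      (∀ (α β : A.QuotObj) (x y : C.Obj) (hx : A.orb x = α) (hy : A.orb y = β)
        (f : C.Hom x y) (s t : G)
        (hs : A.smulObj s y = r β) (ht : A.smulObj t (r α) = A.smulObj s x)
        (h1 : (I.F.obj α).1 = r α) (h2 : (I.F.obj β).1 = r β),
        cast (show A.SkewHom (I.F.obj α).1 (I.F.obj β).1 = A.SkewHom (r α) (r β) by
            rw [h1, h2])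
          (I.F.map α β (A.proj hx hy f))
          = A.skewSingle t (C.trans2 ht.symm hs (A.smulHom s x y f))) := by
  classical
  refine ⟨⟨⟨fun α => ⟨r α, α, rfl⟩, fun α β => CMAux.fwd A r hr hfree α β,
      fun α => CMAux.fwd_id A r hr Q S hfree α,
      fun g f => CMAux.fwd_comp A r hr Q S hfree g f⟩, ?_, ?_⟩, ?_, ?_⟩
  · constructor
    · intro α β h
      have h2 : r α = r β := congrArg Subtype.val h
      rw [← hr α, h2, hr β]
    · rintro ⟨x, α, rfl⟩
      exact ⟨α, rfl⟩
  · intro α β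
    exact ⟨Function.LeftInverse.injective (CMAux.bwd_fwd A r hr hfree),
      Function.RightInverse.surjective (CMAux.fwd_bwd A r hr hfree)⟩
  · intro α
    rfl
  · intro α β x y hx hy f s t hs ht h1 h2
    exact eq_of_heq ((cast_heq _ _).trans
      (heq_of_eq (CMAux.fwd_proj A r hr hfree hx hy f hs ht)))
end
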